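/- arXiv:1309.6060 — 2 statements merged into one kernel-verified Lean document; each statement's English description precedes it below -/
import Mathlib

section
/- Let r ≥ 1 be an integer and let A = Σ_{i ≥ −r} A_i·z^i ∈ z^{−r}·gl_n(k[[z]]) be such that A_{−r} ∈ gl_n(k) is diagonal with n pairwise distinct diagonal entries. Then there exists p ∈ GL_n(k[[z]]) with p ≡ I_n (mod z) such that p·A := p·A·p^{-1} − τ(p)·p^{-1} equals Σ_{i=−r}^{0} D_i·z^i with every D_i ∈ gl_n(k) diagonal and D_{−r} = A_{−r}. -/
noncomputable section

open Polynomial Matrix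

variable {k : Type*} [Field k]

/-- The derivation `τ = z·d/dz` on `k((z))`, acting coefficientwise by `n`. -/
def tauF (f : LaurentSeries k) : LaurentSeries k :=
  ⟨fun n => (n : k) * f.coeff n,
    f.isPWO_support'.mono (fun n hn => by
      simp only [Function.mem_support, ne_eq] at hn ⊢
      exact fun h => hn (by rw [h, mul_zero]))⟩

/-!
Write `A = z^{-r} Â` with `Â ∈ gl_n(k[[z]])` and `Â(0) = diag a`. First solve
`diag β · Q + z^r τ(Q) = Q · Â` with `Q ≡ 1` and `β ≡ a`: in degree `s` the unknowns `Q_s`, `β_s`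
appear only through `[diag a, Q_s] + diag β_s`, and `ad (diag a)` is invertible on off-diagonal
matrices because the `a_i` are distinct, so `Q_s` (off-diagonal) and `β_s` are found recursively.
Then `Q` gauges `A` to `z^{-r} diag β`. The part of `β` of degree `> r` is `z^r c` with `c(0) = 0`,
and it is removed by the diagonal gauge `u = exp ∫ c dz/z`, which satisfies `τ u = c u`.
So `p = diag u · Q` works.
-/

open Function Finset
open scoped PowerSeries

section Recursion

variable {ι : Type*} [Fintype ι] [DecidableEq ι]

def commutatorSolve (a : ι → k) (M : Matrix ι ι k) : Matrix ι ι k :=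
  of fun i j => if i = j then 0 else M i j / (a i - a j)

lemma diagonal_mul_commutatorSolve_sub_add {a : ι → k} (ha : Injective a) (M : Matrix ι ι k) :
    diagonal a * commutatorSolve a M - commutatorSolve a M * diagonal a + diagonal M.diag = M := by
  ext i j
  by_cases hij : i = j
  · subst hij
    simp [commutatorSolve]
  · have hne : a i - a j ≠ 0 := sub_ne_zero.mpr (ha.ne hij)
    simp only [Matrix.sub_apply, Matrix.add_apply, diagonal_mul, mul_diagonal, commutatorSolve,
      of_apply, diagonal_apply_ne _ hij, if_neg hij, add_zero]
    field_simp

variable (r : ℕ) (a : ι → k) (Ac : ℕ → Matrix ι ι k)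

/-- The coefficients `(Q_s, β_s)` of the solution of `diag β · Q + X^(r+1) τ(Q) = Q · Σ Ac_s X^s`.
For `s < r` the factor `((s - r : ℕ) : k)` is `0`, so the last term vanishes as it should. -/
def gaugeCoeffs : ℕ → Matrix ι ι k × (ι → k)
  | 0 => (1, a)
  | s + 1 =>
    let M := ∑ j ∈ (range (s + 1)).attach, (gaugeCoeffs j).1 * Ac (s + 1 - j)
      - ∑ t ∈ (range s).attach, diagonal (gaugeCoeffs (t + 1)).2 * (gaugeCoeffs (s - t)).1
      - ((s - r : ℕ) : k) • (gaugeCoeffs (s - r)).1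
    (commutatorSolve a M, M.diag)
  decreasing_by all_goals grind

def gaugeQ (s : ℕ) : Matrix ι ι k := (gaugeCoeffs r a Ac s).1

def gaugeβ (s : ℕ) : ι → k := (gaugeCoeffs r a Ac s).2

def gaugeDefect (s : ℕ) : Matrix ι ι k :=
  ∑ j ∈ range (s + 1), gaugeQ r a Ac j * Ac (s + 1 - j)
    - ∑ t ∈ range s, diagonal (gaugeβ r a Ac (t + 1)) * gaugeQ r a Ac (s - t)
    - ((s - r : ℕ) : k) • gaugeQ r a Ac (s - r)

lemma gaugeCoeffs_zero : gaugeCoeffs r a Ac 0 = (1, a) := by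
  rw [gaugeCoeffs]

lemma gaugeCoeffs_succ (s : ℕ) :
    gaugeCoeffs r a Ac (s + 1) =
      (commutatorSolve a (gaugeDefect r a Ac s), (gaugeDefect r a Ac s).diag) := by
  rw [gaugeCoeffs, gaugeDefect, ← sum_attach (range (s + 1)), ← sum_attach (range s)]
  rfl

lemma gaugeCoeffs_recurrence (ha : Injective a) (hAc : Ac 0 = diagonal a) (s : ℕ) :
    ∑ t ∈ range (s + 1), diagonal (gaugeβ r a Ac t) * gaugeQ r a Ac (s - t)
      + ((s - (r + 1) : ℕ) : k) • gaugeQ r a Ac (s - (r + 1))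
    = ∑ j ∈ range (s + 1), gaugeQ r a Ac j * Ac (s - j) := by
  have hQ0 : gaugeQ r a Ac 0 = 1 := by rw [gaugeQ, gaugeCoeffs_zero]
  have hβ0 : gaugeβ r a Ac 0 = a := by rw [gaugeβ, gaugeCoeffs_zero]
  rcases s with _ | s
  · simp [hQ0, hβ0, hAc]
  · have hsolve : diagonal a * gaugeQ r a Ac (s + 1) - gaugeQ r a Ac (s + 1) * diagonal a
        + diagonal (gaugeβ r a Ac (s + 1)) = gaugeDefect r a Ac s := by
      simpa only [gaugeQ, gaugeβ, gaugeCoeffs_succ]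
        using diagonal_mul_commutatorSolve_sub_add ha (gaugeDefect r a Ac s)
    rw [gaugeDefect] at hsolve
    rw [sum_range_succ', sum_range_succ, sum_range_succ, Nat.sub_self, Nat.sub_zero, hQ0, hβ0, hAc,
      Nat.add_sub_add_right, ← sub_eq_zero, ← sub_eq_zero.mpr hsolve]
    simp only [Nat.add_sub_add_right, mul_one]
    abel

end Recursion

namespace PowerSeries

def tau : Derivation k k⟦X⟧ k⟦X⟧ := (X : k⟦X⟧) • d⁄dX k

lemma tau_apply (f : k⟦X⟧) : tau f = X * d⁄dX k f := rfl

@[simp] lemma coeff_tau (f : k⟦X⟧) (m : ℕ) : coeff m (tau f) = m * coeff m f := by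
  rcases m with _ | m
  · simp [tau_apply]
  · rw [tau_apply, coeff_succ_X_mul, coeff_derivative]
    push_cast
    ring

lemma exists_tau_eq_mul [CharZero k] {c : k⟦X⟧} (hc : constantCoeff c = 0) :
    ∃ u : k⟦X⟧, constantCoeff u = 1 ∧ tau u = c * u := by
  set g : k⟦X⟧ := mk fun m => coeff m c / m
  have hg : constantCoeff g = 0 := by simp [g]
  have hXg : X * d⁄dX k g = c := by
    ext m
    rcases m with _ | m
    · simp [hc]
    · rw [coeff_succ_X_mul, coeff_derivative]
      simp only [coeff_mk, Nat.cast_add, Nat.cast_one, g]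
      field_simp
  have hsub : HasSubst g := HasSubst.of_constantCoeff_zero' hg
  refine ⟨(exp k).subst g, ?_, ?_⟩
  · have h := constantCoeff_subst_eq_zero hg (exp k - 1) (by simp)
    rw [subst_sub hsub, ← map_one (C (R := k)), subst_C] at h
    simp only [map_sub, MvPowerSeries.constantCoeff_C, sub_eq_zero] at h
    exact h
  · rw [tau_apply, derivative_subst hsub, derivative_exp, ← hXg]
    ring

section MatrixCoeff

variable {ι : Type*}

def matrixMk (F : ℕ → Matrix ι ι k) : Matrix ι ι k⟦X⟧ := of fun i j => mk fun s => F s i j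

@[simp] lemma map_coeff_matrixMk (F : ℕ → Matrix ι ι k) (s : ℕ) :
    (matrixMk F).map (coeff s) = F s := by
  ext i j
  simp [matrixMk]

lemma matrixMk_map_coeff (M : Matrix ι ι k⟦X⟧) : matrixMk (fun s => M.map (coeff s)) = M := by
  ext i j s
  simp [matrixMk]

lemma ext_of_map_coeff {M N : Matrix ι ι k⟦X⟧} (h : ∀ s, M.map (coeff s) = N.map (coeff s)) :
    M = N := by
  ext i j s
  exact congrFun₂ (h s) i j

lemma diagonal_mk_eq_matrixMk [DecidableEq ι] (β : ℕ → ι → k) :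
    diagonal (fun i => mk fun s => β s i) = matrixMk fun s => diagonal (β s) := by
  ext i j s
  by_cases hij : i = j
  · subst hij
    simp [matrixMk]
  · simp [matrixMk, hij]

lemma map_coeff_mul [Fintype ι] (M N : Matrix ι ι k⟦X⟧) (s : ℕ) :
    (M * N).map (coeff s) = ∑ t ∈ range (s + 1), M.map (coeff t) * N.map (coeff (s - t)) := by
  ext i j
  simp only [map_apply, mul_apply, map_sum, coeff_mul, Nat.sum_antidiagonal_eq_sum_range_succ_mk,
    Matrix.sum_apply]
  exact sum_comm

lemma map_coeff_X_pow_smul_map_tau (r : ℕ) (M : Matrix ι ι k⟦X⟧) (s : ℕ) :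
    ((X ^ r : k⟦X⟧) • M.map tau).map (coeff s) = ((s - r : ℕ) : k) • M.map (coeff (s - r)) := by
  ext i j
  simp only [map_apply, Matrix.smul_apply, smul_eq_mul, coeff_X_pow_mul', coeff_tau]
  split_ifs with h
  · rfl
  · simp [Nat.sub_eq_zero_of_le (not_le.mp h).le]

lemma map_tau_diagonal_mul [Fintype ι] [DecidableEq ι] (u : ι → k⟦X⟧) (M : Matrix ι ι k⟦X⟧) :
    (diagonal u * M).map tau = diagonal (fun i => tau (u i)) * M + diagonal u * M.map tau := by
  ext1 i j
  simp only [map_apply, Matrix.add_apply, diagonal_mul, Derivation.leibniz, smul_eq_mul]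
  ring

end MatrixCoeff

variable {ι : Type*} [Fintype ι] [DecidableEq ι]

lemma gaugeCoeffs_series_identity (r : ℕ) {a : ι → k} (ha : Injective a)
    (Ac : ℕ → Matrix ι ι k) (hAc : Ac 0 = diagonal a) :
    diagonal (fun i => mk fun s => gaugeβ r a Ac s i) * matrixMk (gaugeQ r a Ac)
      + (X ^ (r + 1) : k⟦X⟧) • (matrixMk (gaugeQ r a Ac)).map tau
      = matrixMk (gaugeQ r a Ac) * matrixMk Ac := by
  rw [diagonal_mk_eq_matrixMk]
  refine ext_of_map_coeff fun s => ?_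
  rw [Matrix.map_add _ (map_add _), map_coeff_mul, map_coeff_mul, map_coeff_X_pow_smul_map_tau]
  simp only [map_coeff_matrixMk]
  exact gaugeCoeffs_recurrence r a Ac ha hAc s

lemma exists_diagonal_mul_add_X_pow_smul_tau_eq_mul (r : ℕ) {a : ι → k} (ha : Injective a)
    (A : Matrix ι ι k⟦X⟧) (hA : A.map constantCoeff = diagonal a) :
    ∃ (Q : Matrix ι ι k⟦X⟧) (β : ι → k⟦X⟧), Q.map constantCoeff = 1 ∧
      (∀ i, constantCoeff (β i) = a i) ∧
      diagonal β * Q + (X ^ (r + 1) : k⟦X⟧) • Q.map tau = Q * A := by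
  set Ac : ℕ → Matrix ι ι k := fun s => A.map (coeff s)
  have hAc : Ac 0 = diagonal a := by simpa [Ac] using hA
  refine ⟨matrixMk (gaugeQ r a Ac), fun i => mk fun s => gaugeβ r a Ac s i, ?_, ?_, ?_⟩
  · simpa [gaugeQ, gaugeCoeffs_zero] using map_coeff_matrixMk (gaugeQ r a Ac) 0
  · simp [gaugeβ, gaugeCoeffs_zero]
  · simpa only [Ac, matrixMk_map_coeff] using gaugeCoeffs_series_identity r ha Ac hAc

theorem exists_gauge_diagonal [CharZero k] (r : ℕ) {a : ι → k} (ha : Injective a)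
    (A : Matrix ι ι k⟦X⟧) (hA : A.map constantCoeff = diagonal a) :
    ∃ (P : Matrix ι ι k⟦X⟧) (d : ι → k⟦X⟧), P.map constantCoeff = 1 ∧
      (∀ i, constantCoeff (d i) = a i) ∧ (∀ i m, r + 1 < m → coeff m (d i) = 0) ∧
      diagonal d * P + (X ^ (r + 1) : k⟦X⟧) • P.map tau = P * A := by
  obtain ⟨Q, β, hQ0, hβ0, hQ⟩ := exists_diagonal_mul_add_X_pow_smul_tau_eq_mul r ha A hA
  set e : ι → k⟦X⟧ := fun i => mk fun m => coeff (m + (r + 2)) (β i)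
  have hβ : ∀ i, β i = X ^ (r + 2) * e i + (trunc (r + 2) (β i) : k⟦X⟧) :=
    fun i => eq_X_pow_mul_shift_add_trunc (r + 2) (β i)
  choose u hu0 hu using fun i => exists_tau_eq_mul (c := X * e i) (by simp)
  refine ⟨diagonal u * Q, fun i => (trunc (r + 2) (β i) : k⟦X⟧), ?_, fun i => ?_,
    fun i m hm => ?_, ?_⟩
  · rw [Matrix.map_mul, hQ0, diagonal_map (map_zero _), mul_one]
    simp only [hu0, diagonal_one]
  · rw [← coeff_zero_eq_constantCoeff_apply, Polynomial.coeff_coe, coeff_trunc, if_pos (by omega),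
      coeff_zero_eq_constantCoeff_apply, hβ0]
  · rw [Polynomial.coeff_coe, coeff_trunc, if_neg (by omega)]
  · rw [map_tau_diagonal_mul, Matrix.mul_assoc, ← hQ]
    refine Matrix.ext fun i j => ?_
    simp only [Matrix.add_apply, Matrix.smul_apply, diagonal_mul, hu, smul_eq_mul]
    linear_combination (-(u i) * Q i j) * hβ i

end PowerSeries

section Laurent

open HahnSeries

@[simp] lemma coeff_tauF (f : LaurentSeries k) (m : ℤ) : (tauF f).coeff m = m * f.coeff m := rfl

lemma tauF_ofPowerSeries (f : k⟦X⟧) :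
    tauF (ofPowerSeries ℤ k f) = ofPowerSeries ℤ k (PowerSeries.tau f) := by
  ext m
  rw [coeff_tauF, PowerSeries.coeff_coe, PowerSeries.coeff_coe]
  split_ifs with hm
  · rw [mul_zero]
  · rw [PowerSeries.coeff_tau, Nat.cast_natAbs, abs_of_nonneg (not_lt.mp hm)]

lemma coeff_single_neg_mul_ofPowerSeries (r : ℕ) (f : k⟦X⟧) (m : ℤ) :
    (single (-(r : ℤ)) (1 : k) * ofPowerSeries ℤ k f).coeff m =
      if m + r < 0 then 0 else PowerSeries.coeff (m + r).natAbs f := by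
  rw [show m = m + r + -(r : ℤ) by ring, coeff_single_mul_add, one_mul, PowerSeries.coeff_coe]
  simp

def shiftedPowerSeries (r : ℕ) (f : LaurentSeries k) : k⟦X⟧ :=
  PowerSeries.mk fun s => f.coeff (s - r)

lemma constantCoeff_shiftedPowerSeries (r : ℕ) (f : LaurentSeries k) :
    PowerSeries.constantCoeff (shiftedPowerSeries r f) = f.coeff (-(r : ℤ)) := by
  rw [← PowerSeries.coeff_zero_eq_constantCoeff_apply, shiftedPowerSeries, PowerSeries.coeff_mk,
    Nat.cast_zero, zero_sub]

lemma eq_single_neg_mul_shiftedPowerSeries {f : LaurentSeries k} {r : ℕ}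
    (hf : ∀ m : ℤ, m < -(r : ℤ) → f.coeff m = 0) :
    f = single (-(r : ℤ)) 1 * ofPowerSeries ℤ k (shiftedPowerSeries r f) := by
  ext m
  rw [coeff_single_neg_mul_ofPowerSeries]
  split_ifs with hm
  · exact hf m (by omega)
  · rw [shiftedPowerSeries, PowerSeries.coeff_mk]
    congr 1
    omega

lemma single_neg_mul_ofPowerSeries_X_pow (r : ℕ) :
    single (-(r : ℤ)) (1 : k) * ofPowerSeries ℤ k (PowerSeries.X ^ r) = 1 := by
  rw [ofPowerSeries_X_pow, single_mul_single, neg_add_cancel, one_mul]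
  rfl

variable {ι : Type*}

lemma gauge_eq_of_mul_add_eq {R : Type*} [CommRing R] [Fintype ι] [DecidableEq ι]
    {B p A T : Matrix ι ι R} (hp : IsUnit p.det) (h : B * p + T = p * A) :
    B = p * A * p⁻¹ - T * p⁻¹ := by
  rw [← h, Matrix.add_mul, Matrix.mul_assoc, mul_nonsing_inv _ hp, mul_one, add_sub_cancel_right]

lemma isUnit_det_map_ofPowerSeries [Fintype ι] [DecidableEq ι] {P : Matrix ι ι k⟦X⟧}
    (hP : P.map PowerSeries.constantCoeff = 1) : IsUnit (P.map (ofPowerSeries ℤ k)).det := by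
  have hdet : IsUnit P.det := by
    rw [PowerSeries.isUnit_iff_constantCoeff, RingHom.map_det, RingHom.mapMatrix_apply, hP, det_one]
    exact isUnit_one
  rw [← RingHom.mapMatrix_apply, ← RingHom.map_det]
  exact hdet.map _

lemma coeff_map_ofPowerSeries_sub_one_of_nonpos [DecidableEq ι] {P : Matrix ι ι k⟦X⟧}
    (hP : P.map PowerSeries.constantCoeff = 1) (i j : ι) {m : ℤ} (hm : m ≤ 0) :
    ((P.map (ofPowerSeries ℤ k) - 1) i j).coeff m = 0 := by
  have hsub : P.map (ofPowerSeries ℤ k) - 1 = (P - 1).map (ofPowerSeries ℤ k) := by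
    rw [Matrix.map_sub _ (map_sub _), Matrix.map_one _ (map_zero _) (map_one _)]
  have hsub0 : (P - 1).map PowerSeries.constantCoeff = 0 := by
    rw [Matrix.map_sub _ (map_sub _), hP, Matrix.map_one _ (map_zero _) (map_one _), sub_self]
  rw [hsub, map_apply, PowerSeries.coeff_coe]
  split_ifs with hneg
  · rfl
  · rw [show m = 0 by omega, Int.natAbs_zero, PowerSeries.coeff_zero_eq_constantCoeff_apply]
    exact congrFun₂ hsub0 i j

lemma map_tauF_map_ofPowerSeries (P : Matrix ι ι k⟦X⟧) :
    (P.map (ofPowerSeries ℤ k)).map tauF = (P.map PowerSeries.tau).map (ofPowerSeries ℤ k) := by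
  ext1 i j
  exact tauF_ofPowerSeries (P i j)

lemma diagonal_mul_add_map_tauF_eq [Fintype ι] [DecidableEq ι] (r : ℕ)
    {P A : Matrix ι ι k⟦X⟧} {d : ι → k⟦X⟧}
    (h : diagonal d * P + (PowerSeries.X ^ r : k⟦X⟧) • P.map PowerSeries.tau = P * A) :
    diagonal (fun i => single (-(r : ℤ)) 1 * ofPowerSeries ℤ k (d i)) * P.map (ofPowerSeries ℤ k)
      + (P.map (ofPowerSeries ℤ k)).map tauF
      = P.map (ofPowerSeries ℤ k) * (single (-(r : ℤ)) (1 : k) • A.map (ofPowerSeries ℤ k)) := by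
  set Φ := ofPowerSeries ℤ k
  have hΦ := congrArg Φ.mapMatrix h
  simp only [map_add, map_mul, RingHom.mapMatrix_apply, diagonal_map (map_zero Φ),
    Matrix.map_smul' _ _ _ (map_mul Φ)] at hΦ
  rw [Matrix.mul_smul, ← hΦ, map_tauF_map_ofPowerSeries, smul_add, smul_smul,
    single_neg_mul_ofPowerSeries_X_pow, one_smul, ← Matrix.smul_mul, ← diagonal_smul]
  rfl

end Laurent

theorem stmt11_general [CharZero k] {n : ℕ} (r : ℕ) (hr : 1 ≤ r)
    (A : Matrix (Fin n) (Fin n) (LaurentSeries k))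
    (hA : ∀ i j, ∀ m : ℤ, m < -(r : ℤ) → (A i j).coeff m = 0)
    (hdiag : ∀ i j, i ≠ j → (A i j).coeff (-(r : ℤ)) = 0)
    (hdist : ∀ i j, i ≠ j → (A i i).coeff (-(r : ℤ)) ≠ (A j j).coeff (-(r : ℤ))) :
    ∃ p B : Matrix (Fin n) (Fin n) (LaurentSeries k),
      B = p * A * p⁻¹ - (p.map tauF) * p⁻¹ ∧
      IsUnit p.det ∧
      -- p ≡ Iₙ (mod z), entries of p in k[[z]]
      (∀ i j, ∀ m : ℤ, m ≤ 0 → ((p - 1) i j).coeff m = 0) ∧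
      -- B is diagonal ...
      (∀ i j, i ≠ j → B i j = 0) ∧
      -- ... supported in degrees −r, …, 0 (so B = Σ_{i=−r}^{0} D_i z^i with D_i diagonal) ...
      (∀ i, ∀ m : ℤ, (m < -(r : ℤ) ∨ 0 < m) → (B i i).coeff m = 0) ∧
      -- ... with D_{−r} = A_{−r}
      (∀ i, (B i i).coeff (-(r : ℤ)) = (A i i).coeff (-(r : ℤ))) := by
  obtain ⟨r, rfl⟩ := Nat.exists_eq_add_of_le' hr
  set a : Fin n → k := fun i => (A i i).coeff (-((r + 1 : ℕ) : ℤ))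
  set ℓ : LaurentSeries k := HahnSeries.single (-((r + 1 : ℕ) : ℤ)) 1
  set Φ := HahnSeries.ofPowerSeries ℤ k
  have hA_eq : A = ℓ • (A.map (shiftedPowerSeries (r + 1))).map Φ :=
    Matrix.ext fun i j => eq_single_neg_mul_shiftedPowerSeries (hA i j)
  have hA0 : (A.map (shiftedPowerSeries (r + 1))).map PowerSeries.constantCoeff = diagonal a := by
    ext i j
    rw [map_apply, map_apply, constantCoeff_shiftedPowerSeries]
    rcases eq_or_ne i j with rfl | hij
    · rw [diagonal_apply_eq]
    · rw [diagonal_apply_ne _ hij, hdiag i j hij]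
  have ha : Injective a := fun i j h => by_contra fun hij => hdist i j hij h
  obtain ⟨P, d, hP0, hd0, hdr, hPd⟩ := PowerSeries.exists_gauge_diagonal r ha _ hA0
  have hp := isUnit_det_map_ofPowerSeries hP0
  refine ⟨P.map Φ, diagonal fun i => ℓ * Φ (d i), gauge_eq_of_mul_add_eq hp ?_, hp,
    fun i j m hm => coeff_map_ofPowerSeries_sub_one_of_nonpos hP0 i j hm,
    fun i j hij => diagonal_apply_ne _ hij, fun i m hm => ?_, fun i => ?_⟩
  · rw [hA_eq]
    exact diagonal_mul_add_map_tauF_eq (r + 1) hPd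
  · rw [diagonal_apply_eq, coeff_single_neg_mul_ofPowerSeries]
    split_ifs with h
    · rfl
    · exact hdr i _ (by omega)
  · rw [diagonal_apply_eq, coeff_single_neg_mul_ofPowerSeries, if_neg (by omega)]
    simp [hd0, a]

/-- if `A = Σ_{i ≥ −r} A_i z^i ∈ z^{−r}·gl_n(k[[z]])` has diagonal leading
term `A_{−r}` with pairwise distinct diagonal entries, then there is `p ∈ GL_n(k[[z]])`
with `p ≡ Iₙ (mod z)` such that the gauge transform `p·A·p⁻¹ − τ(p)·p⁻¹` is diagonal,
supported in degrees `−r, …, 0`, with leading coefficient `A_{−r}`. -/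
theorem stmt11 [IsAlgClosed k] [CharZero k] {n : ℕ} (r : ℕ) (hr : 1 ≤ r)
    (A : Matrix (Fin n) (Fin n) (LaurentSeries k))
    (hA : ∀ i j, ∀ m : ℤ, m < -(r : ℤ) → (A i j).coeff m = 0)
    (hdiag : ∀ i j, i ≠ j → (A i j).coeff (-(r : ℤ)) = 0)
    (hdist : ∀ i j, i ≠ j → (A i i).coeff (-(r : ℤ)) ≠ (A j j).coeff (-(r : ℤ))) :
    ∃ p B : Matrix (Fin n) (Fin n) (LaurentSeries k),
      B = p * A * p⁻¹ - (p.map tauF) * p⁻¹ ∧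
      IsUnit p.det ∧
      -- p ≡ Iₙ (mod z), entries of p in k[[z]]
      (∀ i j, ∀ m : ℤ, m ≤ 0 → ((p - 1) i j).coeff m = 0) ∧
      -- B is diagonal ...
      (∀ i j, i ≠ j → B i j = 0) ∧
      -- ... supported in degrees −r, …, 0 (so B = Σ_{i=−r}^{0} D_i z^i with D_i diagonal) ...
      (∀ i, ∀ m : ℤ, (m < -(r : ℤ) ∨ 0 < m) → (B i i).coeff m = 0) ∧
      -- ... with D_{−r} = A_{−r}
      (∀ i, (B i i).coeff (-(r : ℤ)) = (A i i).coeff (-(r : ℤ))) :=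
  stmt11_general r hr A hA hdiag hdist
end
end

section
/- Let r ≥ 1 be an integer and let D¹, D² be diagonal matrices whose entries are Laurent polynomials supported in degrees −r,…,0, such that the coefficient of z^{−r} in each of D¹ and D² is a diagonal matrix with pairwise distinct diagonal entries. Then there exists g ∈ GL_n(F) with g·D¹·g^{-1} − τ(g)·g^{-1} = D² if and only if there exist w ∈ S_n with permutation matrix P and a ∈ ℤ^n such that D² = P·D¹·P^{-1} − diag(a_1,…,a_n). -/
/-!
Write `Dᵢ = diag(dᵢ)`. For diagonal connections the gauge equation `g D¹ - τ g = D² g` splits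
into the scalar equations `τ g_ij = (d¹_j - d²_i) g_ij`. Comparing lowest-order terms shows that
a nonzero `f` with `τ f = c f`, where `c` has no positive powers of `z`, forces `c = ord f ∈ ℤ`.
Choosing in each row `i` of the invertible `g` a nonzero entry `g_{i σ(i)}` gives
`d²_i = d¹_{σ(i)} - a_i` with `a_i ∈ ℤ`; distinctness of the leading coefficients of `D²` makes
`σ` injective, hence a permutation. Conversely `g = diag(z^{a_i}) · P` realises the equivalence.
-/

noncomputable section

open Polynomial Matrix

variable {k : Type*} [Field k]

theorem tauF_coeff (f : LaurentSeries k) (m : ℤ) : (tauF f).coeff m = (m : k) * f.coeff m :=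
  rfl

@[simp]
theorem tauF_zero : tauF (0 : LaurentSeries k) = 0 := by
  ext m; simp [tauF_coeff]

theorem tauF_single (a : ℤ) (c : k) :
    tauF (HahnSeries.single a c) = HahnSeries.single a ((a : k) * c) := by
  ext m
  obtain rfl | h := eq_or_ne m a
  · simp [tauF_coeff]
  · simp [tauF_coeff, HahnSeries.coeff_single_of_ne h]

theorem order_nonneg_of_tauF_eq_mul {f c : LaurentSeries k} (hf : f ≠ 0)
    (heq : tauF f = c * f) : 0 ≤ c.order := by
  by_contra! hneg
  have hc : c ≠ 0 := by rintro rfl; simp at hneg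
  -- `tauF f` vanishes below `f.order`, while `c * f` has a nonzero coefficient there.
  have hlead : (c * f).coeff (c.order + f.order) ≠ 0 := by
    rw [HahnSeries.coeff_mul_order_add_order]
    exact mul_ne_zero (HahnSeries.leadingCoeff_ne_zero.2 hc) (HahnSeries.leadingCoeff_ne_zero.2 hf)
  apply hlead
  rw [← heq, tauF_coeff, HahnSeries.coeff_eq_zero_of_lt_order (by linarith), mul_zero]

theorem eq_intCast_order_of_tauF_eq_mul {f c : LaurentSeries k} (hf : f ≠ 0)
    (heq : tauF f = c * f) (hc : ∀ m : ℤ, 0 < m → c.coeff m = 0) :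
    c = (f.order : LaurentSeries k) := by
  have hconst : c = HahnSeries.C (c.coeff 0) := by
    ext m
    rcases lt_trichotomy m 0 with h | rfl | h
    · rw [HahnSeries.coeff_eq_zero_of_lt_order (h.trans_le (order_nonneg_of_tauF_eq_mul hf heq)),
        HahnSeries.C_apply, HahnSeries.coeff_single_of_ne h.ne]
    · simp
    · rw [hc m h, HahnSeries.C_apply, HahnSeries.coeff_single_of_ne h.ne']
  have horder := congrArg (HahnSeries.coeff · f.order) heq
  rw [hconst] at horder
  simp only [tauF_coeff, HahnSeries.C_mul_eq_smul, HahnSeries.coeff_smul, smul_eq_mul] at horder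
  have hc0 : c.coeff 0 = (f.order : k) :=
    (mul_right_cancel₀ (HahnSeries.coeff_order_eq_zero.not.2 hf) horder).symm
  rw [hconst, hc0, HahnSeries.C_apply, HahnSeries.single_zero_intCast]

section Gauge

variable {ι R : Type*} [Fintype ι] [DecidableEq ι] [CommRing R]

theorem gauge_eq_iff_mul_sub_eq_mul (δ : R → R) {g D₁ D₂ : Matrix ι ι R} (hg : IsUnit g.det) :
    g * D₁ * g⁻¹ - g.map δ * g⁻¹ = D₂ ↔ g * D₁ - g.map δ = D₂ * g := by
  rw [← Matrix.sub_mul]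
  constructor
  · rintro rfl
    rw [Matrix.mul_assoc, Matrix.nonsing_inv_mul g hg, Matrix.mul_one]
  · intro h
    rw [h, Matrix.mul_assoc, Matrix.mul_nonsing_inv g hg, Matrix.mul_one]

theorem gauge_diagonal_eq_diagonal_iff (δ : R → R) {g : Matrix ι ι R} {d₁ d₂ : ι → R}
    (hg : IsUnit g.det) :
    g * diagonal d₁ * g⁻¹ - g.map δ * g⁻¹ = diagonal d₂ ↔
      ∀ i j, δ (g i j) = (d₁ j - d₂ i) * g i j := by
  rw [gauge_eq_iff_mul_sub_eq_mul δ hg, ← Matrix.ext_iff]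
  refine forall₂_congr fun i j => ?_
  simp only [Matrix.sub_apply, Matrix.map_apply, mul_diagonal, diagonal_mul]
  constructor <;> intro h <;> linear_combination -h

end Gauge

theorem of_ite_eq_apply_eq_permMatrix {ι R : Type*} [DecidableEq ι] [Zero R] [One R]
    (w : Equiv.Perm ι) :
    (Matrix.of fun i j => if i = w j then (1 : R) else 0) = (w⁻¹).permMatrix R := by
  ext i j
  simp [Equiv.Perm.inv_def, Equiv.symm_apply_eq, eq_comm (a := i)]

theorem permMatrix_mul_permMatrix_inv {ι R : Type*} [Fintype ι] [DecidableEq ι]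
    [NonAssocSemiring R] (w : Equiv.Perm ι) : w.permMatrix R * (w⁻¹).permMatrix R = 1 := by
  rw [← permMatrix_mul, inv_mul_cancel, permMatrix_one]

theorem permMatrix_mul_diagonal_mul_inv {ι R : Type*} [Fintype ι] [DecidableEq ι] [CommRing R]
    (w : Equiv.Perm ι) (d : ι → R) :
    w.permMatrix R * diagonal d * (w.permMatrix R)⁻¹ = diagonal (d ∘ w) := by
  rw [Matrix.inv_eq_right_inv (permMatrix_mul_permMatrix_inv w), PEquiv.toMatrix_toPEquiv_mul,
    PEquiv.mul_toMatrix_toPEquiv]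
  simp [Equiv.Perm.inv_def]

section Classification

variable {ι : Type*} [Fintype ι] [DecidableEq ι] {d₁ d₂ : ι → LaurentSeries k}

theorem exists_sub_eq_intCast_of_gauge {g : Matrix ι ι (LaurentSeries k)} (hg : IsUnit g.det)
    (hgauge : ∀ i j, tauF (g i j) = (d₁ j - d₂ i) * g i j)
    (hpos₁ : ∀ i, ∀ m : ℤ, 0 < m → (d₁ i).coeff m = 0)
    (hpos₂ : ∀ i, ∀ m : ℤ, 0 < m → (d₂ i).coeff m = 0) :
    ∃ (σ : ι → ι) (a : ι → ℤ), ∀ i, d₁ (σ i) - d₂ i = a i := by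
  have hrow : ∀ i, ∃ j, g i j ≠ 0 := fun i => by
    by_contra! h
    exact hg.ne_zero (det_eq_zero_of_row_eq_zero i h)
  choose σ hσ using hrow
  refine ⟨σ, fun i => (g i (σ i)).order, fun i => ?_⟩
  refine eq_intCast_order_of_tauF_eq_mul (hσ i) (hgauge i (σ i)) fun m hm => ?_
  rw [HahnSeries.coeff_sub, hpos₁ _ m hm, hpos₂ _ m hm, sub_zero]

theorem isUnit_det_diagonal_single_mul_permMatrix (w : Equiv.Perm ι) (a : ι → ℤ) :
    IsUnit (diagonal (fun i => HahnSeries.single (a i) (1 : k)) * w.permMatrix _).det := by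
  rw [det_mul, det_diagonal]
  refine IsUnit.mul ?_ (isUnit_det_of_right_inverse (permMatrix_mul_permMatrix_inv w))
  exact isUnit_iff_ne_zero.2 (Finset.prod_ne_zero_iff.2 fun i _ => by simp)

theorem exists_gauge_iff_exists_perm (m₀ : ℤ) (hm₀ : m₀ ≠ 0)
    (hpos₁ : ∀ i, ∀ m : ℤ, 0 < m → (d₁ i).coeff m = 0)
    (hpos₂ : ∀ i, ∀ m : ℤ, 0 < m → (d₂ i).coeff m = 0)
    (hinj₂ : Function.Injective fun i => (d₂ i).coeff m₀) :
    (∃ g : Matrix ι ι (LaurentSeries k), IsUnit g.det ∧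
        ∀ i j, tauF (g i j) = (d₁ j - d₂ i) * g i j) ↔
      ∃ (w : Equiv.Perm ι) (a : ι → ℤ), ∀ i, d₂ i = d₁ (w⁻¹ i) - a i := by
  constructor
  · rintro ⟨g, hg, hgauge⟩
    obtain ⟨σ, a, hσ⟩ := exists_sub_eq_intCast_of_gauge hg hgauge hpos₁ hpos₂
    -- an integer constant does not touch the coefficient of `z^m₀`, `m₀ ≠ 0`
    have hcoeff : ∀ i, (d₂ i).coeff m₀ = (d₁ (σ i)).coeff m₀ := fun i => by
      have := congrArg (HahnSeries.coeff · m₀) (hσ i)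
      simp only [HahnSeries.coeff_sub, ← HahnSeries.single_zero_intCast,
        HahnSeries.coeff_single_of_ne hm₀] at this
      exact (sub_eq_zero.1 this).symm
    have hσinj : Function.Injective σ := fun i j hij =>
      hinj₂ (by simp only [hcoeff, hij])
    refine ⟨(Equiv.ofBijective σ (Finite.injective_iff_bijective.1 hσinj)).symm, a, fun i => ?_⟩
    simp only [Equiv.Perm.inv_def, Equiv.symm_symm, Equiv.ofBijective_apply]
    linear_combination -(hσ i)
  · rintro ⟨w, a, hd₂⟩
    refine ⟨_, isUnit_det_diagonal_single_mul_permMatrix w⁻¹ a, fun i j => ?_⟩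
    simp only [diagonal_mul, PEquiv.toMatrix_apply, Equiv.toPEquiv_apply, Option.mem_def,
      Option.some.injEq]
    split_ifs with h
    · subst h
      rw [hd₂, sub_sub_cancel, mul_one, tauF_single, ← HahnSeries.single_zero_intCast,
        HahnSeries.single_mul_single, zero_add, mul_one]
    · simp

end Classification

theorem stmt14_general {n : ℕ} (r : ℕ) (hr : 1 ≤ r)
    (D₁ D₂ : Matrix (Fin n) (Fin n) (LaurentSeries k))
    (hdiag1 : ∀ i j, i ≠ j → D₁ i j = 0)
    (hdiag2 : ∀ i j, i ≠ j → D₂ i j = 0)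
    (hsupp1 : ∀ i, ∀ m : ℤ, (m < -(r : ℤ) ∨ 0 < m) → (D₁ i i).coeff m = 0)
    (hsupp2 : ∀ i, ∀ m : ℤ, (m < -(r : ℤ) ∨ 0 < m) → (D₂ i i).coeff m = 0)
    (hdist2 : ∀ i j, i ≠ j → (D₂ i i).coeff (-(r : ℤ)) ≠ (D₂ j j).coeff (-(r : ℤ))) :
    (∃ g : Matrix (Fin n) (Fin n) (LaurentSeries k),
      IsUnit g.det ∧ g * D₁ * g⁻¹ - (g.map tauF) * g⁻¹ = D₂)
    ↔
    (∃ (w : Equiv.Perm (Fin n)) (a : Fin n → ℤ),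
      D₂ = (Matrix.of fun i j => if i = w j then (1 : LaurentSeries k) else 0) * D₁ *
            (Matrix.of fun i j => if i = w j then (1 : LaurentSeries k) else 0)⁻¹ -
            Matrix.diagonal (fun i => ((a i : ℤ) : LaurentSeries k))) := by
  rw [← IsDiag.diagonal_diag (A := D₁) hdiag1, ← IsDiag.diagonal_diag (A := D₂) hdiag2]
  simp_rw [of_ite_eq_apply_eq_permMatrix, permMatrix_mul_diagonal_mul_inv, diagonal_sub,
    diagonal_injective.eq_iff, funext_iff]
  have hgauge_iff (g : Matrix (Fin n) (Fin n) (LaurentSeries k)) :=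
    and_congr_right (gauge_diagonal_eq_diagonal_iff tauF (g := g) (d₁ := diag D₁) (d₂ := diag D₂))
  simp_rw [hgauge_iff]
  exact exists_gauge_iff_exists_perm (-(r : ℤ)) (by omega) (fun i m hm => hsupp1 i m (.inr hm))
    (fun i m hm => hsupp2 i m (.inr hm))
    fun i j hij => by_contra fun hne => hdist2 i j hne hij

/-- let `D¹, D²` be diagonal, supported in degrees `−r,…,0`, whose
coefficients of `z^{−r}` have pairwise distinct diagonal entries.  Then `D¹` and `D²`
are gauge equivalent under `GL_n(F)` iff `D² = P·D¹·P⁻¹ − diag(a)` for some permutation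
matrix `P` (of some `w ∈ S_n`, with `P·e_j = e_{w(j)}`) and some `a ∈ ℤ^n`. -/
theorem stmt14 [IsAlgClosed k] [CharZero k] {n : ℕ} (r : ℕ) (hr : 1 ≤ r)
    (D₁ D₂ : Matrix (Fin n) (Fin n) (LaurentSeries k))
    (hdiag1 : ∀ i j, i ≠ j → D₁ i j = 0)
    (hdiag2 : ∀ i j, i ≠ j → D₂ i j = 0)
    (hsupp1 : ∀ i, ∀ m : ℤ, (m < -(r : ℤ) ∨ 0 < m) → (D₁ i i).coeff m = 0)
    (hsupp2 : ∀ i, ∀ m : ℤ, (m < -(r : ℤ) ∨ 0 < m) → (D₂ i i).coeff m = 0)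
    (hdist1 : ∀ i j, i ≠ j → (D₁ i i).coeff (-(r : ℤ)) ≠ (D₁ j j).coeff (-(r : ℤ)))
    (hdist2 : ∀ i j, i ≠ j → (D₂ i i).coeff (-(r : ℤ)) ≠ (D₂ j j).coeff (-(r : ℤ))) :
    (∃ g : Matrix (Fin n) (Fin n) (LaurentSeries k),
      IsUnit g.det ∧ g * D₁ * g⁻¹ - (g.map tauF) * g⁻¹ = D₂)
    ↔
    (∃ (w : Equiv.Perm (Fin n)) (a : Fin n → ℤ),
      D₂ = (Matrix.of fun i j => if i = w j then (1 : LaurentSeries k) else 0) * D₁ *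
            (Matrix.of fun i j => if i = w j then (1 : LaurentSeries k) else 0)⁻¹ -
            Matrix.diagonal (fun i => ((a i : ℤ) : LaurentSeries k))) :=
  stmt14_general r hr D₁ D₂ hdiag1 hdiag2 hsupp1 hsupp2 hdist2
end
end
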